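/- The 5-cycle C₅ has a vector 3-colouring witnessing vector chromatic number at most √5 < 3: placing the vertices on the unit circle in pentagram order, adjacent vertices have inner product cos(4π/5) = −1/(√5 − 1), so ⃗χ(C₅) ≤ √5. -/

import Mathlib

open Real

theorem SimpleGraph.cycleGraph_adj_sub_modEq {n : ℕ} {v w : Fin n}
    (h : (SimpleGraph.cycleGraph n).Adj v w) :
    (v - w : ℤ) ≡ 1 [ZMOD n] ∨ (v - w : ℤ) ≡ -1 [ZMOD n] := by
  have of_val_sub_eq_one : ∀ a b : Fin n, (a - b).val = 1 → (a - b : ℤ) ≡ 1 [ZMOD n] := by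
    intro a b hab
    rw [Fin.val_sub] at hab
    calc (a - b : ℤ) ≡ (n - b + a : ℕ) [ZMOD n] :=
          Int.modEq_iff_dvd.mpr ⟨1, by push_cast [b.is_lt.le]; ring⟩
      _ ≡ ((n - b + a) % n : ℕ) [ZMOD n] := by
          rw [Int.natCast_mod]; exact (Int.mod_modEq _ _).symm
      _ = 1 := by rw [hab]; rfl
  rcases SimpleGraph.cycleGraph_adj'.mp h with h | h
  · exact .inl (of_val_sub_eq_one v w h)
  · exact .inr (by simpa using (of_val_sub_eq_one w v h).neg)

theorem cos_two_pi_mul_div_of_modEq {n : ℕ} (k : ℤ) {d : ℤ}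
    (hd : d ≡ 1 [ZMOD n] ∨ d ≡ -1 [ZMOD n]) :
    cos (2 * π * k * d / n) = cos (2 * π * k / n) := by
  rcases eq_or_ne n 0 with rfl | hn
  · simp
  rcases hd with hd | hd <;> obtain ⟨m, hm⟩ := hd.symm.dvd
  · have hangle : 2 * π * k * d / n = 2 * π * k / n + (k * m : ℤ) * (2 * π) := by
      rw [eq_add_of_sub_eq hm]; push_cast; field_simp; ring
    rw [hangle, cos_add_int_mul_two_pi]
  · have hangle : 2 * π * k * d / n = -(2 * π * k / n) + (k * m : ℤ) * (2 * π) := by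
      rw [eq_add_of_sub_eq hm]; push_cast; field_simp; ring
    rw [hangle, cos_add_int_mul_two_pi, cos_neg]

noncomputable def unitCirclePoint (θ : ℝ) : EuclideanSpace ℝ (Fin 2) :=
  (WithLp.equiv 2 (Fin 2 → ℝ)).symm ![cos θ, sin θ]

theorem norm_unitCirclePoint (θ : ℝ) : ‖unitCirclePoint θ‖ = 1 := by
  simp [unitCirclePoint, EuclideanSpace.norm_eq, Fin.sum_univ_two]

theorem inner_unitCirclePoint (a b : ℝ) :
    inner ℝ (unitCirclePoint a) (unitCirclePoint b) = cos (a - b) := by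
  simp [unitCirclePoint, EuclideanSpace.inner_eq_star_dotProduct, dotProduct, Fin.sum_univ_two,
    cos_sub, mul_comm]

theorem cos_four_pi_div_five : cos (4 * π / 5) = -1 / (√5 - 1) := by
  have h5 : √5 * √5 = 5 := mul_self_sqrt (by norm_num)
  have hne : √5 - 1 ≠ 0 := sub_ne_zero.mpr (by nlinarith [sqrt_nonneg 5])
  rw [show 4 * π / 5 = π - π / 5 by ring, cos_pi_sub, cos_pi_div_five]
  field_simp
  linarith

/-- The 5-cycle `C₅` has a vector `√5`-colouring (and `√5 < 3`): placing the vertices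
on the unit circle in pentagram order, vertex `j` at angle `4πj/5`, adjacent vertices
have inner product `cos(4π/5) = −1/(√5 − 1)`.  Hence `⃗χ(C₅) ≤ √5`. -/
theorem c5_vector_coloring :
    Real.sqrt 5 < 3 ∧
    ∃ x : Fin 5 → EuclideanSpace ℝ (Fin 2),
      (∀ j : Fin 5, x j = (WithLp.equiv 2 (Fin 2 → ℝ)).symm
        ![Real.cos (4 * Real.pi * (j : ℕ) / 5), Real.sin (4 * Real.pi * (j : ℕ) / 5)]) ∧
      (∀ v, ‖x v‖ = 1) ∧
      ∀ v w : Fin 5, (SimpleGraph.cycleGraph 5).Adj v w →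
        (inner ℝ (x v) (x w) : ℝ) ≤ -1 / (Real.sqrt 5 - 1) := by
  refine ⟨(sqrt_lt' (by norm_num)).mpr (by norm_num), fun j ↦ unitCirclePoint (4 * π * (j : ℕ) / 5),
    fun j ↦ rfl, fun v ↦ norm_unitCirclePoint _, fun v w hvw ↦ le_of_eq ?_⟩
  calc inner ℝ (unitCirclePoint (4 * π * (v : ℕ) / 5)) (unitCirclePoint (4 * π * (w : ℕ) / 5))
      = cos (2 * π * (2 : ℤ) * ((v - w : ℤ) : ℝ) / (5 : ℕ)) := by
        rw [inner_unitCirclePoint]; push_cast; ring_nf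
    _ = cos (2 * π * (2 : ℤ) / (5 : ℕ)) :=
        cos_two_pi_mul_div_of_modEq 2 (SimpleGraph.cycleGraph_adj_sub_modEq hvw)
    _ = -1 / (√5 - 1) := by
        rw [← cos_four_pi_div_five]; push_cast; ring_nf
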